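/- arXiv:2103.05609 — 3 statements merged into one kernel-verified Lean document; each statement's English description precedes it below -/
import Mathlib

section
/- For every real x with −π < x < π, the series Σ_{n=1}^{∞} 4·sin((2n−1)x) / ((2n−1)·π) converges and its sum equals sign(x), i.e., it equals 1 if x > 0, equals 0 if x = 0, and equals −1 if x < 0. -/
/-!
With `z = exp (x * I)`, the series is `4 / π` times the imaginary part of
`∑ z ^ (2n+1) / (2n+1)`, which inside the unit disc sums to
`artanh z = (log (1 + z) - log (1 - z)) / 2`. On the unit circle away from `±1` the partial sums
of `z ^ (2n+1)` form a bounded geometric sum, so Dirichlet's test makes the series converge, and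
Abel's limit theorem identifies its sum with the boundary value of `artanh`. Since
`1 + e^{ix} = 2 cos (x/2) e^{ix/2}` and `1 - e^{ix} = 2 sin (x/2) e^{i(x-π)/2}`, for `0 < x < π` the
imaginary part of that value is `π / 4`; the case `x < 0` follows by oddness.
-/

open Finset Filter Topology
open scoped Real

namespace Complex

theorem one_add_mem_slitPlane_of_norm_le_one {z : ℂ} (hz : ‖z‖ ≤ 1) (h : z ≠ -1) :
    1 + z ∈ slitPlane := by
  rw [mem_slitPlane_iff, add_re, one_re, add_im, one_im, zero_add]
  by_contra! hre
  have hsq : z.re * z.re + z.im * z.im ≤ 1 := by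
    rw [← normSq_apply, normSq_eq_norm_sq]; nlinarith [norm_nonneg z]
  exact h (ext (by simp only [neg_re, one_re]; nlinarith) (by simp [hre.2]))

theorem hasSum_odd_pow_div {z : ℂ} (hz : ‖z‖ < 1) :
    HasSum (fun n : ℕ => z ^ (2 * n + 1) / (2 * n + 1)) ((log (1 + z) - log (1 - z)) / 2) := by
  have h := ((hasSum_taylorSeries_neg_log hz).sub
    (hasSum_taylorSeries_neg_log (z := -z) (by rwa [norm_neg]))).div_const 2
  rw [sub_neg_eq_add, neg_add_eq_sub, sub_neg_eq_add] at h
  have hodd : ∀ n ∉ Set.range (fun k : ℕ => 2 * k + 1),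
      (z ^ n / n - (-z) ^ n / n) / 2 = 0 := by
    intro n hn
    have hev : Even n := by
      rcases Nat.even_or_odd n with hev | ⟨k, rfl⟩
      · exact hev
      · exact absurd ⟨k, rfl⟩ hn
    rw [hev.neg_pow, sub_self, zero_div]
  convert! ((Function.Injective.hasSum_iff (by intro a b; simp) hodd).mpr h) using 1
  funext k
  rw [Function.comp_apply, Odd.neg_pow ⟨k, rfl⟩]
  push_cast
  ring

theorem norm_sum_range_odd_pow_le {z : ℂ} (hz : ‖z‖ ≤ 1) (h : z ^ 2 ≠ 1) (N : ℕ) :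
    ‖∑ n ∈ range N, z ^ (2 * n + 1)‖ ≤ 2 / ‖z ^ 2 - 1‖ := by
  have hsum : ∑ n ∈ range N, z ^ (2 * n + 1) = z * (((z ^ 2) ^ N - 1) / (z ^ 2 - 1)) := by
    rw [← geom_sum_eq h, mul_sum]
    exact sum_congr rfl fun n _ => by ring
  have hnum : ‖(z ^ 2) ^ N - 1‖ ≤ 2 := by
    calc ‖(z ^ 2) ^ N - 1‖ ≤ ‖(z ^ 2) ^ N‖ + ‖(1 : ℂ)‖ := norm_sub_le _ _
      _ ≤ 1 + 1 := by
        gcongr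
        · rw [norm_pow, norm_pow]
          exact pow_le_one₀ (by positivity) (pow_le_one₀ (norm_nonneg z) hz)
        · simp
      _ = 2 := by norm_num
  rw [hsum, norm_mul, norm_div]
  calc ‖z‖ * (‖(z ^ 2) ^ N - 1‖ / ‖z ^ 2 - 1‖) ≤ 1 * (2 / ‖z ^ 2 - 1‖) := by gcongr
    _ = 2 / ‖z ^ 2 - 1‖ := one_mul _

theorem cauchySeq_sum_range_odd_pow_div {z : ℂ} (hz : ‖z‖ ≤ 1) (h : z ^ 2 ≠ 1) :
    CauchySeq fun N : ℕ => ∑ n ∈ range N, z ^ (2 * n + 1) / (2 * n + 1) := by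
  have hanti : Antitone fun n : ℕ => (2 * (n : ℝ) + 1)⁻¹ :=
    antitone_iff_forall_lt.mpr fun _ _ _ => by gcongr
  have hzero : Tendsto (fun n : ℕ => (2 * (n : ℝ) + 1)⁻¹) atTop (𝓝 0) :=
    tendsto_inv_atTop_zero.comp <| tendsto_atTop_add_const_right _ _ <|
      tendsto_natCast_atTop_atTop.const_mul_atTop two_pos
  convert! hanti.cauchySeq_series_mul_of_tendsto_zero_of_bounded hzero
    (norm_sum_range_odd_pow_le hz h) using 3
  rw [real_smul, div_eq_inv_mul]
  push_cast
  rfl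

theorem tendsto_sum_range_odd_pow_div {z : ℂ} (hz : ‖z‖ ≤ 1) (h₁ : z ≠ 1) (h₂ : z ≠ -1) :
    Tendsto (fun N : ℕ => ∑ n ∈ range N, z ^ (2 * n + 1) / (2 * n + 1)) atTop
      (𝓝 ((log (1 + z) - log (1 - z)) / 2)) := by
  obtain ⟨l, hl⟩ := cauchySeq_tendsto_of_complete
    (cauchySeq_sum_range_odd_pow_div hz (by simp [h₁, h₂]))
  -- Abel's theorem is applied at `t ^ 2`: then `t * ∑ f n * (t ^ 2) ^ n` is the series at `t * z`.
  have habel := tendsto_tsum_powerSeries_nhdsWithin_lt hl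
  have hsq : Tendsto (fun t : ℝ => t ^ 2) (𝓝[<] 1) (𝓝[<] 1) := by
    refine tendsto_nhdsWithin_of_tendsto_nhds_of_eventually_within _ ?_ ?_
    · simpa using (continuous_pow 2).tendsto (1 : ℝ) |>.mono_left nhdsWithin_le_nhds
    · filter_upwards [Ioo_mem_nhdsLT (by norm_num : (-1 : ℝ) < 1)] with t ht
      rw [Set.mem_Iio, sq_lt_one_iff_abs_lt_one, abs_lt]
      exact ht
  have hofReal : Tendsto (fun t : ℝ => (t : ℂ)) (𝓝[<] 1) (𝓝 1) := by
    simpa using (continuous_ofReal.tendsto (1 : ℝ)).mono_left nhdsWithin_le_nhds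
  have hseries : Tendsto (fun t : ℝ => (t : ℂ) *
      ∑' n : ℕ, z ^ (2 * n + 1) / (2 * n + 1) * ((t : ℂ) ^ 2) ^ n) (𝓝[<] 1) (𝓝 l) := by
    simpa using hofReal.mul (habel.comp (tendsto_map.comp hsq))
  have hlog : Tendsto (fun t : ℝ => (log (1 + t * z) - log (1 - t * z)) / 2) (𝓝[<] 1)
      (𝓝 ((log (1 + z) - log (1 - z)) / 2)) := by
    have hmul : Tendsto (fun t : ℝ => (t : ℂ) * z) (𝓝[<] 1) (𝓝 z) := by
      simpa using hofReal.mul_const z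
    refine (((tendsto_const_nhds.add hmul).clog ?_).sub
      ((tendsto_const_nhds.sub hmul).clog ?_)).div_const 2
    · exact one_add_mem_slitPlane_of_norm_le_one hz h₂
    · rw [sub_eq_add_neg]
      exact one_add_mem_slitPlane_of_norm_le_one (by rwa [norm_neg]) (by simpa using h₁)
  refine tendsto_nhds_unique (hseries.congr' ?_) hlog ▸ hl
  filter_upwards [Ioo_mem_nhdsLT (by norm_num : (-1 : ℝ) < 1)] with t ht
  have htz : ‖(t : ℂ) * z‖ < 1 := by
    rw [norm_mul, norm_real, Real.norm_eq_abs]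
    calc |t| * ‖z‖ ≤ |t| * 1 := by gcongr
      _ < 1 := by rw [mul_one, abs_lt]; exact ht
  rw [← (hasSum_odd_pow_div htz).tsum_eq, ← tsum_mul_left]
  congr 1
  funext n
  ring

theorem arg_real_mul_exp_mul_I {r θ : ℝ} (hr : 0 < r) (hθ : θ ∈ Set.Ioc (-π) π) :
    arg (r * exp (θ * I)) = θ := by
  rw [exp_mul_I]
  exact arg_mul_cos_add_sin_mul_I hr hθ

theorem one_add_exp_mul_I (x : ℝ) :
    1 + exp (x * I) = ↑(2 * Real.cos (x / 2)) * exp (↑(x / 2) * I) := by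
  have hx : (x : ℂ) * I = ↑(x / 2) * I + ↑(x / 2) * I := by push_cast; ring
  have hinv : exp (-↑(x / 2) * I) * exp (↑(x / 2) * I) = 1 := by rw [← exp_add]; simp
  rw [hx, exp_add, ofReal_mul, ofReal_cos, ofReal_ofNat, two_cos]
  linear_combination -hinv

theorem one_sub_exp_mul_I (x : ℝ) :
    1 - exp (x * I) = ↑(2 * Real.sin (x / 2)) * exp (↑((x - π) / 2) * I) := by
  have hx : (x : ℂ) * I = ↑(x / 2) * I + ↑(x / 2) * I := by push_cast; ring
  have hxπ : (↑((x - π) / 2) : ℂ) * I = ↑(x / 2) * I + -π / 2 * I := by push_cast; ring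
  have hinv : exp (-↑(x / 2) * I) * exp (↑(x / 2) * I) = 1 := by rw [← exp_add]; simp
  rw [hx, hxπ, exp_add, exp_add, exp_neg_pi_div_two_mul_I, ofReal_mul, ofReal_sin, ofReal_ofNat,
    two_sin]
  linear_combination -hinv + (exp (-↑(x / 2) * I) - exp (↑(x / 2) * I)) * exp (↑(x / 2) * I) * I_sq

theorem im_log_one_add_exp_mul_I_sub {x : ℝ} (hx₀ : 0 < x) (hxπ : x < π) :
    (log (1 + exp (x * I)) - log (1 - exp (x * I))).im = π / 2 := by
  have hcos : 0 < 2 * Real.cos (x / 2) :=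
    mul_pos two_pos (Real.cos_pos_of_mem_Ioo ⟨by linarith, by linarith⟩)
  have hsin : 0 < 2 * Real.sin (x / 2) :=
    mul_pos two_pos (Real.sin_pos_of_pos_of_lt_pi (by linarith) (by linarith))
  rw [sub_im, log_im, log_im, one_add_exp_mul_I, one_sub_exp_mul_I,
    arg_real_mul_exp_mul_I hcos ⟨by linarith, by linarith⟩,
    arg_real_mul_exp_mul_I hsin ⟨by linarith, by linarith⟩]
  ring

end Complex

open Complex in
theorem tendsto_sum_range_sin_odd_mul_div_of_pos {x : ℝ} (hx₀ : 0 < x) (hxπ : x < π) :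
    Tendsto (fun N : ℕ => ∑ n ∈ range N, Real.sin ((2 * n + 1) * x) / (2 * n + 1)) atTop
      (𝓝 (π / 4)) := by
  have hz : ‖exp (x * I)‖ = 1 := norm_exp_ofReal_mul_I x
  have him : (exp (x * I)).im ≠ 0 := by
    rw [exp_ofReal_mul_I_im]
    exact (Real.sin_pos_of_pos_of_lt_pi hx₀ hxπ).ne'
  have h := (continuous_im.tendsto _).comp <|
    tendsto_sum_range_odd_pow_div hz.le (fun h => by simp [h] at him) (fun h => by simp [h] at him)
  rw [Function.comp_def, div_ofNat_im, im_log_one_add_exp_mul_I_sub hx₀ hxπ] at h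
  refine (h.congr fun N => ?_).trans (by rw [div_div]; norm_num)
  rw [im_sum]
  refine sum_congr rfl fun n _ => ?_
  have hden : (2 * (n : ℂ) + 1) = ↑(2 * (n : ℝ) + 1) := by push_cast; ring
  have harg : ((2 * n + 1 : ℕ) : ℂ) * (x * I) = ↑((2 * (n : ℝ) + 1) * x) * I := by
    push_cast; ring
  rw [← exp_nat_mul, harg, hden, div_ofReal_im, exp_ofReal_mul_I_im]

theorem tendsto_sum_range_sin_odd_mul_div {x : ℝ} (hx₁ : -π < x) (hx₂ : x < π) :
    Tendsto (fun N : ℕ => ∑ n ∈ range N, Real.sin ((2 * n + 1) * x) / (2 * n + 1)) atTop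
      (𝓝 (π / 4 * Real.sign x)) := by
  rcases lt_trichotomy x 0 with hneg | rfl | hpos
  · rw [Real.sign_of_neg hneg, mul_neg_one]
    refine (tendsto_sum_range_sin_odd_mul_div_of_pos (neg_pos.2 hneg) (by linarith)).neg.congr
      fun N => ?_
    simp only [← sum_neg_distrib, mul_neg, Real.sin_neg, neg_div, neg_neg]
  · simp
  · rw [Real.sign_of_pos hpos, mul_one]
    exact tendsto_sum_range_sin_odd_mul_div_of_pos hpos hx₂

theorem stmt_7 (x : ℝ) (hx₁ : -Real.pi < x) (hx₂ : x < Real.pi) :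
    Filter.Tendsto
      (fun N : ℕ => ∑ n ∈ Finset.range N,
        4 * Real.sin ((2 * ((n : ℝ) + 1) - 1) * x) / ((2 * ((n : ℝ) + 1) - 1) * Real.pi))
      Filter.atTop
      (nhds (if 0 < x then 1 else if x = 0 then 0 else -1)) := by
  have hsign : (if 0 < x then 1 else if x = 0 then 0 else -1 : ℝ) = 4 / π * (π / 4 * x.sign) := by
    rw [← mul_assoc, div_mul_div_cancel₀ Real.pi_ne_zero, div_self four_ne_zero, one_mul]
    rcases lt_trichotomy x 0 with h | rfl | h
    · simp [Real.sign_of_neg h, h.not_gt, h.ne]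
    · simp
    · simp [Real.sign_of_pos h, h]
  rw [hsign]
  refine ((tendsto_sum_range_sin_odd_mul_div hx₁ hx₂).const_mul (4 / π)).congr fun N => ?_
  rw [mul_sum]
  refine sum_congr rfl fun n _ => ?_
  have hodd : 2 * ((n : ℝ) + 1) - 1 = 2 * n + 1 := by ring
  rw [hodd, div_mul_div_comm, mul_comm π]
end

section
/- The discrete Legendre orthogonal polynomials are orthogonal: for every N ≥ 1 and all indices m, n with 0 ≤ m, n ≤ N − 1 and m ≠ n, the sum Σ_{k=0}^{N−1} D_m(k;N)·D_n(k;N) equals 0. -/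
open Finset

/-- The fading factorial `x^{(i)} = ∏_{j=0}^{i−1} (x − j)`. -/
noncomputable def fadingFactorial (x : ℝ) (i : ℕ) : ℝ :=
  ∏ j ∈ Finset.range i, (x - (j : ℝ))

/-- The unnormalized discrete Legendre orthogonal polynomial (DLOP) of degree `n`
with `N` samples: `D n k = ∑_{i=0}^{n} (−1)^i C(n,i) C(n+i,i) k^{(i)} / (N−1)^{(i)}`. -/
noncomputable def dlop (N n k : ℕ) : ℝ :=
  ∑ i ∈ Finset.range (n + 1),
    (-1 : ℝ) ^ i * (n.choose i : ℝ) * ((n + i).choose i : ℝ) *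
      fadingFactorial (k : ℝ) i / fadingFactorial ((N : ℝ) - 1) i

/-! Write `M = N - 1`. Since `D_m` is a polynomial of degree `m` in `k`, it suffices that `D_n` is
orthogonal on `{0, …, M}` to every polynomial of degree `< n`, hence (by a triangular change of
basis) to the reflected falling factorials `(M - k)^{(j)}`, `j < n`. Against these the sum is
computed termwise: `∑ₖ k^{(i)} (M - k)^{(j)} = i! j! C(M + 1, i + j + 1)`, which turns the
`i`-th term into `(-1)^i C(n, i)` times a multiple of `(n + i)^{(n - j - 1)} (M - i)^{(j)}`.
That is a polynomial of degree `n - 1` in `i`, so its `n`-th finite difference vanishes. -/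

open Polynomial Nat

theorem Nat.sum_range_choose_mul_choose_sub (M i j : ℕ) :
    ∑ x ∈ range (M + 1), x.choose i * (M - x).choose j = (M + 1).choose (i + j + 1) := by
  induction M generalizing j with
  | zero => rcases i with _ | i <;> rcases j with _ | j <;> simp [Nat.choose_eq_zero_of_lt]
  | succ M ih =>
    rcases j with _ | j
    · have h0 := ih 0
      simp only [Nat.choose_zero_right, mul_one] at h0 ⊢
      rw [sum_range_succ, h0, Nat.choose_succ_succ (M + 1) i, add_comm]
    · have pascal : ∀ x ∈ range (M + 1), x.choose i * (M + 1 - x).choose (j + 1) =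
          x.choose i * (M - x).choose j + x.choose i * (M - x).choose (j + 1) := fun x hx => by
        rw [show M + 1 - x = M - x + 1 by grind, Nat.choose_succ_succ, mul_add]
      rw [sum_range_succ, Nat.sub_self, Nat.choose_zero_succ, mul_zero, add_zero,
        sum_congr rfl pascal, sum_add_distrib, ih, ih, ← add_assoc, Nat.choose_succ_succ (M + 1)]

theorem Nat.sum_range_descFactorial_mul_descFactorial_sub (M i j : ℕ) :
    ∑ x ∈ range (M + 1), x.descFactorial i * (M - x).descFactorial j =
      i ! * j ! * (M + 1).choose (i + j + 1) := by
  simp only [Nat.descFactorial_eq_factorial_mul_choose]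
  rw [← Nat.sum_range_choose_mul_choose_sub, mul_sum]
  exact sum_congr rfl fun x _ => by ring

theorem Nat.factorial_mul_add_choose_mul_factorial_mul_choose {n i j : ℕ} (M : ℕ) (hj : j < n) :
    n ! * (n + i).choose i * i ! * (M + 1).choose (i + j + 1) =
      (M + 1) * (n + i).descFactorial (n - j - 1) * (M - i).descFactorial j *
        M.descFactorial i := by
  apply Nat.eq_of_mul_eq_mul_right (i + j + 1).factorial_pos
  have h1 : n ! * (n + i).choose i * i ! = (n + i) ! := by
    rw [mul_comm n !, ← Nat.add_choose_mul_factorial_mul_factorial, mul_right_comm]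
  have h2 : (n + i).descFactorial (n - j - 1) * (i + j + 1)! = (n + i)! := by
    rw [mul_comm, ← Nat.factorial_mul_descFactorial (by omega : n - j - 1 ≤ n + i),
      show n + i - (n - j - 1) = i + j + 1 by omega]
  have h3 : (M + 1).choose (i + j + 1) * (i + j + 1)! =
      (M + 1) * ((M - i).descFactorial j * M.descFactorial i) := by
    rw [mul_comm, ← Nat.descFactorial_eq_factorial_mul_choose, Nat.succ_descFactorial_succ,
      ← Nat.descFactorial_mul_descFactorial (by omega : i ≤ i + j), Nat.add_sub_cancel_left]
  calc _ = (n + i)! * ((M + 1).choose (i + j + 1) * (i + j + 1)!) := by rw [← h1]; ring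
    _ = _ := by rw [h3, ← h2]; ring

theorem sum_range_neg_one_pow_mul_choose_mul_eval_eq_zero {R : Type*} [CommRing R] {n : ℕ}
    {p : R[X]} (hp : p.natDegree < n) :
    ∑ i ∈ range (n + 1), (-1) ^ i * (n.choose i : R) * p.eval (i : R) = 0 := by
  have h := congr_fun (Polynomial.fwdDiff_iter_eq_zero_of_degree_lt hp) 0
  simp only [fwdDiff_iter_eq_sum_shift, zero_add, nsmul_one, zsmul_eq_mul, Pi.zero_apply] at h
  rw [← mul_zero ((-1 : R) ^ n), ← h, mul_sum]
  refine sum_congr rfl fun i hi => ?_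
  obtain ⟨d, rfl⟩ := Nat.exists_eq_add_of_le (Nat.lt_succ_iff.1 (mem_range.1 hi))
  have hsq : ((-1 : R) ^ d) * (-1) ^ d = 1 := by rw [← mul_pow]; simp
  rw [Nat.add_sub_cancel_left]
  push_cast
  linear_combination (-(-1) ^ i * ((i + d).choose i : R) * p.eval (i : R)) * hsq

section Reflected

variable {R : Type*} [CommRing R] [IsDomain R]

theorem natDegree_descPochhammer_comp_C_sub_X (a : R) (j : ℕ) :
    ((descPochhammer R j).comp (C a - X)).natDegree = j := by
  rw [natDegree_comp, descPochhammer_natDegree, show C a - X = -(X - C a) by ring,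
    natDegree_neg, natDegree_X_sub_C, mul_one]

theorem leadingCoeff_descPochhammer_comp_C_sub_X (a : R) (j : ℕ) :
    ((descPochhammer R j).comp (C a - X)).leadingCoeff = (-1) ^ j := by
  have hlin : C a - X = -(X - C a) := by ring
  rw [leadingCoeff_comp (by rw [hlin, natDegree_neg, natDegree_X_sub_C]; exact one_ne_zero),
    (monic_descPochhammer R j).leadingCoeff, descPochhammer_natDegree, hlin, leadingCoeff_neg,
    leadingCoeff_X_sub_C, one_mul]

noncomputable def reflectedDescPochhammer (a : R) : Polynomial.Sequence R where
  elems' j := (descPochhammer R j).comp (C a - X)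
  degree_eq' j := by
    rw [degree_eq_natDegree, natDegree_descPochhammer_comp_C_sub_X]
    exact leadingCoeff_ne_zero.1 <| by
      rw [leadingCoeff_descPochhammer_comp_C_sub_X]
      exact pow_ne_zero _ (neg_ne_zero.2 one_ne_zero)

theorem reflectedDescPochhammer_eval_natCast {M k : ℕ} (hk : k ≤ M) (j : ℕ) :
    (reflectedDescPochhammer (M : R) j).eval (k : R) = (M - k).descFactorial j := by
  simp only [reflectedDescPochhammer, eval_comp, eval_sub, eval_C, eval_X]
  rw [← Nat.cast_sub hk, descPochhammer_eval_eq_descFactorial]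

end Reflected

theorem fadingFactorial_eq_eval (x : ℝ) (i : ℕ) :
    fadingFactorial x i = (descPochhammer ℝ i).eval x :=
  (descPochhammer_eval_eq_prod_range i x).symm

theorem fadingFactorial_natCast (k i : ℕ) : fadingFactorial k i = k.descFactorial i := by
  rw [fadingFactorial_eq_eval, descPochhammer_eval_eq_descFactorial]

theorem dlop_succ (M n k : ℕ) :
    dlop (M + 1) n k = ∑ i ∈ range (n + 1),
      (-1) ^ i * (n.choose i : ℝ) * ((n + i).choose i : ℝ) * k.descFactorial i /
        M.descFactorial i := by
  simp only [dlop, Nat.cast_add_one, add_sub_cancel_right, fadingFactorial_natCast]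

noncomputable def dlopPoly (N n : ℕ) : ℝ[X] :=
  ∑ i ∈ range (n + 1), ((-1) ^ i * (n.choose i : ℝ) * ((n + i).choose i : ℝ) /
    fadingFactorial ((N : ℝ) - 1) i) • descPochhammer ℝ i

theorem eval_dlopPoly (N n k : ℕ) : (dlopPoly N n).eval (k : ℝ) = dlop N n k := by
  simp only [dlopPoly, dlop, eval_finsetSum, eval_smul, smul_eq_mul, fadingFactorial_eq_eval,
    mul_div_right_comm]

theorem degree_dlopPoly_le (N n : ℕ) : (dlopPoly N n).degree ≤ n :=
  mem_degreeLE.1 <| sum_mem fun i hi => Submodule.smul_mem _ _ <| mem_degreeLE.2 <| by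
    rw [degree_eq_natDegree (monic_descPochhammer ℝ i).ne_zero, descPochhammer_natDegree]
    exact_mod_cast Nat.lt_succ_iff.1 (mem_range.1 hi)

theorem add_choose_mul_factorial_mul_choose_div_descFactorial {M n i j : ℕ} (hi : i ≤ n)
    (hn : n ≤ M) (hj : j < n) :
    ((n + i).choose i : ℝ) * (i ! * j ! * (M + 1).choose (i + j + 1)) / M.descFactorial i =
      ((M + 1) * j ! / n !) *
        ((n + i).descFactorial (n - j - 1) * (M - i).descFactorial j) := by
  have hM : (M.descFactorial i : ℝ) ≠ 0 := by
    exact_mod_cast (Nat.descFactorial_pos.2 (hi.trans hn)).ne'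
  have key : ((n ! * (n + i).choose i * i ! * (M + 1).choose (i + j + 1) : ℕ) : ℝ) =
      ((M + 1) * (n + i).descFactorial (n - j - 1) * (M - i).descFactorial j *
        M.descFactorial i : ℕ) := by
    exact_mod_cast Nat.factorial_mul_add_choose_mul_factorial_mul_choose M hj
  push_cast at key
  field_simp
  linear_combination key

theorem sum_descFactorial_sub_mul_dlop_eq_zero {M n j : ℕ} (hn : n ≤ M) (hj : j < n) :
    ∑ k ∈ range (M + 1), ((M - k).descFactorial j : ℝ) * dlop (M + 1) n k = 0 := by
  set Q : ℝ[X] := (descPochhammer ℝ (n - j - 1)).comp (X + C (n : ℝ)) *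
    reflectedDescPochhammer (M : ℝ) j
  have hQ : Q.natDegree < n := by
    refine (natDegree_mul_le.trans ?_).trans_lt (by omega : n - j - 1 + j < n)
    rw [Sequence.natDegree_eq, natDegree_comp, descPochhammer_natDegree, natDegree_X_add_C,
      mul_one]
  have hQ_eval : ∀ i ≤ M,
      Q.eval (i : ℝ) = (n + i).descFactorial (n - j - 1) * (M - i).descFactorial j := by
    intro i hi
    simp only [Q, eval_mul, eval_comp, eval_add, eval_X, eval_C]
    rw [reflectedDescPochhammer_eval_natCast hi, ← Nat.cast_add, add_comm (i : ℕ),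
      descPochhammer_eval_eq_descFactorial]
  calc ∑ k ∈ range (M + 1), ((M - k).descFactorial j : ℝ) * dlop (M + 1) n k
      = ∑ i ∈ range (n + 1), (-1) ^ i * (n.choose i : ℝ) * (((n + i).choose i : ℝ) *
          (∑ k ∈ range (M + 1), (k.descFactorial i * (M - k).descFactorial j : ℕ)) /
            M.descFactorial i) := by
        simp only [dlop_succ, mul_sum, Nat.cast_sum, Nat.cast_mul, sum_div]
        rw [sum_comm]
        refine sum_congr rfl fun i _ => sum_congr rfl fun k _ => ?_
        ring
    _ = ((M + 1) * j ! / n !) *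
          ∑ i ∈ range (n + 1), (-1) ^ i * (n.choose i : ℝ) * Q.eval (i : ℝ) := by
        rw [mul_sum]
        refine sum_congr rfl fun i hi => ?_
        have hi : i ≤ n := Nat.lt_succ_iff.1 (mem_range.1 hi)
        rw [Nat.sum_range_descFactorial_mul_descFactorial_sub, Nat.cast_mul, Nat.cast_mul,
          add_choose_mul_factorial_mul_choose_div_descFactorial hi hn hj, hQ_eval i (hi.trans hn)]
        ring
    _ = 0 := by rw [sum_range_neg_one_pow_mul_choose_mul_eval_eq_zero hQ, mul_zero]

theorem sum_eval_mul_dlop_eq_zero {M n : ℕ} (hn : n ≤ M) {p : ℝ[X]} (hp : p.degree < n) :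
    ∑ k ∈ range (M + 1), p.eval (k : ℝ) * dlop (M + 1) n k = 0 := by
  let L : ℝ[X] →ₗ[ℝ] ℝ := ∑ k ∈ range (M + 1), dlop (M + 1) n k • leval (k : ℝ)
  have hL : ∀ q, L q = ∑ k ∈ range (M + 1), q.eval (k : ℝ) * dlop (M + 1) n k := fun q => by
    simp [L, mul_comm]
  have hunit : ∀ j < n, IsUnit (reflectedDescPochhammer (M : ℝ) j).leadingCoeff := fun j _ =>
    (leadingCoeff_descPochhammer_comp_C_sub_X (M : ℝ) j).symm ▸ isUnit_neg_one.pow j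
  have hker : degreeLT ℝ n ≤ LinearMap.ker L := by
    rw [← (reflectedDescPochhammer (M : ℝ)).span_degreeLT hunit, Submodule.span_le]
    rintro _ ⟨j, hj, rfl⟩
    rw [SetLike.mem_coe, LinearMap.mem_ker, hL, ← sum_descFactorial_sub_mul_dlop_eq_zero hn hj]
    exact sum_congr rfl fun k hk => by
      rw [reflectedDescPochhammer_eval_natCast (Nat.lt_succ_iff.1 (mem_range.1 hk))]
  rw [← hL]
  exact hker (mem_degreeLT.2 hp)

theorem stmt_10_general (N m n : ℕ) (hm : m ≤ N - 1) (hn : n ≤ N - 1)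
    (hmn : m ≠ n) :
    ∑ k ∈ Finset.range N, dlop N m k * dlop N n k = 0 := by
  obtain _ | M := N
  · simp
  wlog hlt : m < n generalizing m n
  · simp_rw [mul_comm (dlop _ m _)]
    exact this n m hmn.symm hn hm (by omega)
  simp_rw [← eval_dlopPoly (M + 1) m]
  exact sum_eval_mul_dlop_eq_zero hn <|
    (degree_dlopPoly_le _ m).trans_lt (by exact_mod_cast hlt)

theorem stmt_10 (N m n : ℕ) (hN : 1 ≤ N) (hm : m ≤ N - 1) (hn : n ≤ N - 1)
    (hmn : m ≠ n) :
    ∑ k ∈ Finset.range N, dlop N m k * dlop N n k = 0 :=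
  stmt_10_general N m n hm hn hmn
end

section
/- Uniqueness of band-limited functions from uniform samples (Nyquist–Shannon for trigonometric polynomials): let φ be a natural number, let f and g be real functions on [0,1] that both lie in the linear span of {f_0, f_1, …, f_{2φ}} of the Fourier basis on [0,1], and let N ≥ 2φ + 1 be an integer. If f(k/N) = g(k/N) for every k ∈ {0, …, N−1}, then f = g on [0,1]. -/
open Finset

/-- The Fourier basis on `[0,1]`: `f 0 = 1`, `f (2n-1) x = √2 sin(2πnx)`,
`f (2n) x = √2 cos(2πnx)` for `n ≥ 1`. -/
noncomputable def fourierBasisFun (n : ℕ) (x : ℝ) : ℝ :=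
  if n = 0 then 1
  else if n % 2 = 1 then Real.sqrt 2 * Real.sin (2 * Real.pi * (((n : ℝ) + 1) / 2) * x)
  else Real.sqrt 2 * Real.cos (2 * Real.pi * ((n : ℝ) / 2) * x)

open Polynomial Complex in
/-- Polynomial model of a basis function. -/
noncomputable def fbPoly (φ n : ℕ) : Polynomial ℂ :=
  if n = 0 then X ^ φ
  else if n % 2 = 1 then
    C ((Real.sqrt 2 : ℂ) / 2) * (C (-I) * X ^ (φ + (n + 1) / 2) + C I * X ^ (φ - (n + 1) / 2))
  else
    C ((Real.sqrt 2 : ℂ) / 2) * (X ^ (φ + n / 2) + X ^ (φ - n / 2))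

open Polynomial Complex in
lemma fbPoly_natDegree_le (φ n : ℕ) (hn : n ≤ 2 * φ) :
    (fbPoly φ n).natDegree ≤ 2 * φ := by
  unfold fbPoly
  split_ifs with h0 h1
  · simpa using Nat.le_mul_of_pos_left φ (by norm_num)
  · have h2 : φ + (n + 1) / 2 ≤ 2 * φ := by omega
    have h3 : φ - (n + 1) / 2 ≤ 2 * φ := by omega
    compute_degree <;> omega
  · have h2 : φ + n / 2 ≤ 2 * φ := by omega
    compute_degree <;> omega

open Polynomial Complex in
lemma exp_pow_aux (x : ℝ) (m : ℕ) :
    Complex.exp (((2 * Real.pi * x : ℝ) : ℂ) * I) ^ m =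
      Complex.exp (((2 * Real.pi * m * x : ℝ) : ℂ) * I) := by
  rw [← Complex.exp_nat_mul]
  push_cast
  ring_nf

open Polynomial Complex in
lemma fbPoly_eval (φ n : ℕ) (hn : n ≤ 2 * φ) (x : ℝ) :
    (fbPoly φ n).eval (Complex.exp (((2 * Real.pi * x : ℝ) : ℂ) * I)) =
      Complex.exp (((2 * Real.pi * φ * x : ℝ) : ℂ) * I) * (fourierBasisFun n x : ℂ) := by
  unfold fbPoly fourierBasisFun
  split_ifs with h0 h1
  · rw [eval_pow, eval_X, exp_pow_aux]
    simp
  · -- odd case, n = 2m-1 with m = (n+1)/2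
    set m : ℕ := (n + 1) / 2 with hm
    have hmφ : m ≤ φ := by omega
    have hcast : ((n : ℝ) + 1) / 2 = (m : ℝ) := by
      have h2 : ((n : ℝ)) + 1 = 2 * m := by exact_mod_cast (show n + 1 = 2 * m by omega)
      rw [h2]; ring
    rw [hcast]
    simp only [eval_mul, eval_add, eval_C, eval_pow, eval_X, exp_pow_aux]
    have e1 : (2 * Real.pi * ((φ + m : ℕ) : ℝ) * x : ℝ) =
        (2 * Real.pi * φ * x) + (2 * Real.pi * m * x) := by push_cast; ring
    have e2 : (2 * Real.pi * ((φ - m : ℕ) : ℝ) * x : ℝ) =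
        (2 * Real.pi * φ * x) + (-(2 * Real.pi * m * x)) := by
      push_cast [Nat.cast_sub hmφ]; ring
    rw [e1, e2]
    push_cast
    simp only [Complex.sin, add_mul, neg_mul, Complex.exp_add]
    ring
  · -- even case
    set m : ℕ := n / 2 with hm
    have hmφ : m ≤ φ := by omega
    have hcast : ((n : ℝ)) / 2 = (m : ℝ) := by
      have h2 : ((n : ℝ)) = 2 * m := by exact_mod_cast (show n = 2 * m by omega)
      rw [h2]; ring
    rw [hcast]
    simp only [eval_mul, eval_add, eval_C, eval_pow, eval_X, exp_pow_aux]
    have e1 : (2 * Real.pi * ((φ + m : ℕ) : ℝ) * x : ℝ) =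
        (2 * Real.pi * φ * x) + (2 * Real.pi * m * x) := by push_cast; ring
    have e2 : (2 * Real.pi * ((φ - m : ℕ) : ℝ) * x : ℝ) =
        (2 * Real.pi * φ * x) + (-(2 * Real.pi * m * x)) := by
      push_cast [Nat.cast_sub hmφ]; ring
    rw [e1, e2]
    push_cast
    simp only [Complex.cos, add_mul, neg_mul, Complex.exp_add]
    ring

theorem stmt_19 (φ : ℕ) (f g : ℝ → ℝ)
    (hf : f ∈ Submodule.span ℝ (fourierBasisFun '' {n : ℕ | n ≤ 2 * φ}))
    (hg : g ∈ Submodule.span ℝ (fourierBasisFun '' {n : ℕ | n ≤ 2 * φ}))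
    (N : ℕ) (hN : 2 * φ + 1 ≤ N)
    (hsamples : ∀ k : ℕ, k < N → f ((k : ℝ) / N) = g ((k : ℝ) / N)) :
    Set.EqOn f g (Set.Icc (0:ℝ) 1) := by
  classical
  have hNpos : 0 < N := by omega
  have hh : f - g ∈ Submodule.span ℝ (fourierBasisFun '' {n : ℕ | n ≤ 2 * φ}) :=
    Submodule.sub_mem _ hf hg
  obtain ⟨l, hl, hrep⟩ := (Finsupp.mem_span_image_iff_linearCombination ℝ).1 hh
  have hrep' : ∀ x : ℝ, f x - g x =
      ∑ n ∈ Finset.range (2 * φ + 1), l n * fourierBasisFun n x := by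
    intro x
    have h1 := congrFun hrep x
    rw [Finsupp.linearCombination_apply] at h1
    rw [show f x - g x = (f - g) x from rfl, ← h1, Finsupp.sum, Finset.sum_apply]
    simp only [Pi.smul_apply, smul_eq_mul]
    refine Finset.sum_subset ?_ ?_
    · intro n hn
      have := hl hn
      simp only [Set.mem_setOf_eq] at this
      simp only [Finset.mem_range]
      omega
    · intro n _ hn
      simp [Finsupp.notMem_support_iff.1 hn]
  set P : Polynomial ℂ :=
    ∑ n ∈ Finset.range (2 * φ + 1), Polynomial.C ((l n : ℝ) : ℂ) * fbPoly φ n with hP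
  have hPeval : ∀ x : ℝ, P.eval (Complex.exp (((2 * Real.pi * x : ℝ) : ℂ) * Complex.I)) =
      Complex.exp (((2 * Real.pi * φ * x : ℝ) : ℂ) * Complex.I) * ((f x - g x : ℝ) : ℂ) := by
    intro x
    rw [hP, Polynomial.eval_finset_sum]
    have hterm : ∀ n ∈ Finset.range (2 * φ + 1),
        Polynomial.eval (Complex.exp (((2 * Real.pi * x : ℝ) : ℂ) * Complex.I))
          (Polynomial.C ((l n : ℝ) : ℂ) * fbPoly φ n) =
        Complex.exp (((2 * Real.pi * φ * x : ℝ) : ℂ) * Complex.I) *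
          (((l n * fourierBasisFun n x : ℝ)) : ℂ) := by
      intro n hn
      rw [Polynomial.eval_mul, Polynomial.eval_C,
        fbPoly_eval φ n (by simp at hn; omega) x]
      push_cast
      ring
    rw [Finset.sum_congr rfl hterm, ← Finset.mul_sum, hrep' x]
    push_cast
    ring
  have hζ : IsPrimitiveRoot (Complex.exp (2 * Real.pi * Complex.I / N)) N :=
    Complex.isPrimitiveRoot_exp N (by omega)
  have hroot : ∀ k : Fin N,
      P.eval (Complex.exp (2 * Real.pi * Complex.I / N) ^ (k : ℕ)) = 0 := by
    intro k
    have hN0 : (N : ℂ) ≠ 0 := by exact_mod_cast hNpos.ne'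
    have hk : Complex.exp (2 * Real.pi * Complex.I / N) ^ (k : ℕ) =
        Complex.exp (((2 * Real.pi * ((k : ℝ) / N) : ℝ) : ℂ) * Complex.I) := by
      rw [← Complex.exp_nat_mul]
      congr 1
      push_cast
      field_simp
    rw [hk, hPeval, hsamples k k.2]
    simp
  have hdeg : P.natDegree < N := by
    have : P.natDegree ≤ 2 * φ := by
      apply Polynomial.natDegree_sum_le_of_forall_le
      intro n hn
      refine le_trans (Polynomial.natDegree_C_mul_le _ _) ?_
      exact fbPoly_natDegree_le φ n (by simp at hn; omega)
    omega
  have hP0 : P = 0 := by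
    apply Polynomial.eq_zero_of_natDegree_lt_card_of_eval_eq_zero P
      (f := fun k : Fin N => Complex.exp (2 * Real.pi * Complex.I / N) ^ (k : ℕ))
    · intro i j hij
      exact Fin.ext (hζ.pow_inj i.2 j.2 hij)
    · exact hroot
    · simpa using hdeg
  intro x _
  have hx := hPeval x
  rw [hP0] at hx
  simp only [Polynomial.eval_zero] at hx
  have hexp : Complex.exp (((2 * Real.pi * φ * x : ℝ) : ℂ) * Complex.I) ≠ 0 :=
    Complex.exp_ne_zero _
  have h0 : ((f x - g x : ℝ) : ℂ) = 0 := by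
    rcases mul_eq_zero.1 hx.symm with h | h
    · exact absurd h hexp
    · exact h
  have : f x - g x = 0 := by exact_mod_cast h0
  linarith
end
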